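/- arXiv:2105.09209 — 4 statements merged into one kernel-verified Lean document; each statement's English description precedes it below -/
import Mathlib

section
/- Let 𝔤 be a finite-dimensional nilpotent Lie algebra over ℝ, let v ∈ 𝔤 and let φ be a derivation of 𝔤. Then the trace of the composition (ad v) ∘ φ, as an endomorphism of 𝔤, is zero. -/
set_option autoImplicit false

private lemma derivation_mem_lcs
    (g : Type*) [LieRing g] [LieAlgebra ℝ g] (φ : LieDerivation ℝ g g) :
    ∀ k, ∀ x ∈ LieModule.lowerCentralSeries ℝ g g k,
      φ x ∈ LieModule.lowerCentralSeries ℝ g g k := by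
  intro k
  induction k with
  | zero => intro x _; trivial
  | succ k ih =>
    intro x hx
    rw [LieModule.lowerCentralSeries_succ] at hx ⊢
    rw [← LieSubmodule.mem_toSubmodule, LieSubmodule.lieIdeal_oper_eq_linear_span'] at hx ⊢
    induction hx using Submodule.span_induction with
    | mem m hm =>
      obtain ⟨a, -, n, hn, rfl⟩ := hm
      rw [LieDerivation.apply_lie_eq_add]
      refine Submodule.add_mem _ ?_ ?_
      · exact Submodule.subset_span ⟨a, trivial, φ n, ih n hn, rfl⟩
      · exact Submodule.subset_span ⟨φ a, trivial, n, hn, rfl⟩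
    | zero => simp
    | add a b _ _ ha hb => rw [map_add]; exact Submodule.add_mem _ ha hb
    | smul t a _ ha => rw [map_smul]; exact Submodule.smul_mem _ t ha

/-- If `𝔤` is a finite-dimensional nilpotent real Lie algebra, `v ∈ 𝔤` and `φ` is a
derivation of `𝔤`, then the trace of `(ad v) ∘ φ` is zero. -/
theorem trace_ad_comp_derivation_eq_zero
    (g : Type*) [LieRing g] [LieAlgebra ℝ g] [Module.Finite ℝ g]
    [LieRing.IsNilpotent g] (v : g) (φ : LieDerivation ℝ g g) :
    LinearMap.trace ℝ g ((LieAlgebra.ad ℝ g v) ∘ₗ φ.toLinearMap) = 0 := by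
  set f := (LieAlgebra.ad ℝ g v) ∘ₗ φ.toLinearMap with hf
  have key : ∀ k x, (f ^ k) x ∈ LieModule.lowerCentralSeries ℝ g g k := by
    intro k
    induction k with
    | zero => intro x; trivial
    | succ k ih =>
      intro x
      rw [pow_succ', Module.End.mul_apply]
      have h1 : φ ((f ^ k) x) ∈ LieModule.lowerCentralSeries ℝ g g k :=
        derivation_mem_lcs g φ k _ (ih x)
      rw [LieModule.lowerCentralSeries_succ]
      show ⁅v, φ ((f ^ k) x)⁆ ∈ _
      exact LieSubmodule.lie_mem_lie (LieSubmodule.mem_top v) h1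
  obtain ⟨n, hn⟩ := LieModule.IsNilpotent.nilpotent ℝ g g
  have hfn : f ^ n = 0 := by
    ext x
    have := key n x
    rw [hn] at this
    simpa using this
  exact (LinearMap.isNilpotent_trace_of_isNilpotent ⟨n, hfn⟩).eq_zero
end

section
/- Let 𝔤̃ = 𝔤 ⊕⊥ 𝔞 be a standard decomposition of a metric Lie algebra, let e_1,…,e_k be an orthogonal basis of 𝔞 with ⟨e_s,e_s⟩ = ε_s ∈ {±1}, and let φ_s be the derivation of 𝔤 given by φ_s(v) = [v,e_s]. Let H ∈ 𝔤̃ be the unique vector with ⟨H,x⟩ = Tr(ad x) for all x ∈ 𝔤̃. Then H = −Σ_s ε_s (Tr φ_s) e_s (in particular H ∈ 𝔞 and ⟨H,v⟩ = 0 for all v ∈ 𝔤), and the restriction of ad H to 𝔤 equals Σ_s ε_s (Tr φ_s) φ_s. -/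
set_option autoImplicit false

/-- On a metric Lie algebra with a standard decomposition `L = I ⊕⊥ a`, with an
orthogonal basis `e_s` of `a` (`⟨e_s,e_s⟩ = ε_s = ±1`), derivations
`φ_s(v) = ⁅v, e_s⁆` of `I`, and `H` the metric dual of `x ↦ Tr (ad x)`, one has
`H = -∑ s, ε_s (Tr φ_s) e_s` (in particular `H ∈ a` and `⟨H, v⟩ = 0` for `v ∈ I`)
and `(ad H)|_I = ∑ s, ε_s (Tr φ_s) φ_s`. -/
theorem H_eq_and_ad_H_of_standard_decomposition
    (L : Type*) [LieRing L] [LieAlgebra ℝ L] [Module.Finite ℝ L]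
    (B : LinearMap.BilinForm ℝ L)
    (hsymm : ∀ x y : L, B x y = B y x) (hnondeg : B.Nondegenerate)
    (I : LieIdeal ℝ L) (a : LieSubalgebra ℝ L)
    (hnil : LieRing.IsNilpotent I) (hab : IsLieAbelian a)
    (hcompl : IsCompl (I : Submodule ℝ L) a.toSubmodule)
    (horth : ∀ v ∈ I, ∀ X ∈ a, B v X = 0)
    (hInondeg : ∀ v ∈ I, (∀ w ∈ I, B v w = 0) → v = 0)
    (hanondeg : ∀ X ∈ a, (∀ Y ∈ a, B X Y = 0) → X = 0)
    (k : ℕ) (e : Fin k → L) (he : ∀ s, e s ∈ a)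
    (hspan : Submodule.span ℝ (Set.range e) = a.toSubmodule)
    (ε : Fin k → ℝ) (hε : ∀ s, ε s = 1 ∨ ε s = -1)
    (hdiag : ∀ s, B (e s) (e s) = ε s)
    (hoffdiag : ∀ s r, s ≠ r → B (e s) (e r) = 0)
    (φ : Fin k → (I →ₗ[ℝ] I))
    (hφ : ∀ s, ∀ v : I, ((φ s) v : L) = ⁅(v : L), e s⁆)
    (H : L) (hH : ∀ x : L, B H x = LinearMap.trace ℝ L (LieAlgebra.ad ℝ L x)) :
    H = -∑ s, (ε s * LinearMap.trace ℝ I (φ s)) • e s ∧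
    H ∈ a ∧
    (∀ v ∈ I, B H v = 0) ∧
    (∀ v : I, ⁅H, (v : L)⁆ = ∑ s, (ε s * LinearMap.trace ℝ I (φ s)) • ((φ s) v : L)) := by
  classical
  haveI := hnil
  set c : Fin k → ℝ := fun s => ε s * LinearMap.trace ℝ I (φ s) with hc
  set H₀ : L := -∑ s, c s • e s with hH₀
  -- ε s squared is 1
  have hε2 : ∀ s, ε s * ε s = 1 := by
    intro s; rcases hε s with h | h <;> rw [h] <;> norm_num
  -- trace of ad v vanishes for v ∈ I
  have htrI : ∀ v ∈ I, LinearMap.trace ℝ L (LieAlgebra.ad ℝ L v) = 0 := by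
    intro v hv
    have hmem : ∀ x : L, (LieAlgebra.ad ℝ L v) x ∈ (I : Submodule ℝ L) := by
      intro x
      have h1 : (⁅x, v⁆ : L) ∈ I := I.lie_mem hv
      have h2 : (-⁅x, v⁆ : L) ∈ I := neg_mem h1
      simpa [lie_skew] using h2
    rw [← LinearMap.trace_restrict_eq_of_forall_mem (I : Submodule ℝ L) _ hmem]
    have hres : ((LieAlgebra.ad ℝ L v).restrict (fun x _ => hmem x)) =
        LieAlgebra.ad ℝ I ⟨v, hv⟩ := by
      ext w
      simp [LinearMap.restrict_apply, LieAlgebra.ad_apply]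
      rfl
    erw [hres]
    have hnilp : _root_.IsNilpotent (LieAlgebra.ad ℝ I ⟨v, hv⟩) :=
      LieModule.isNilpotent_toEnd_of_isNilpotent ℝ I I ⟨v, hv⟩
    exact (LinearMap.isNilpotent_trace_of_isNilpotent hnilp).eq_zero
  -- bracket of e r with elements of a vanishes
  have habz : ∀ r : Fin k, ∀ X ∈ a, (⁅e r, X⁆ : L) = 0 := by
    intro r X hX
    have h0 : ⁅(⟨e r, he r⟩ : a), (⟨X, hX⟩ : a)⁆ = 0 := trivial_lie_zero _ _ _ _
    have h1 : ((⁅(⟨e r, he r⟩ : a), (⟨X, hX⟩ : a)⁆ : a) : L) = ⁅e r, X⁆ := rfl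
    rw [h0] at h1
    simpa using h1.symm
  -- trace of ad (e r)
  have htre : ∀ r, LinearMap.trace ℝ L (LieAlgebra.ad ℝ L (e r)) =
      - LinearMap.trace ℝ I (φ r) := by
    intro r
    have hmem : ∀ x : L, (LieAlgebra.ad ℝ L (e r)) x ∈ (I : Submodule ℝ L) := by
      intro x
      have hx : x ∈ (I : Submodule ℝ L) ⊔ a.toSubmodule := by
        rw [hcompl.sup_eq_top]; trivial
      obtain ⟨v, hv, X, hX, rfl⟩ := Submodule.mem_sup.mp hx
      have h1 : (⁅e r, v⁆ : L) ∈ I := I.lie_mem hv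
      have h2 : (⁅e r, v + X⁆ : L) = ⁅e r, v⁆ := by rw [lie_add, habz r X hX, add_zero]
      rw [LieAlgebra.ad_apply, h2]; exact h1
    rw [← LinearMap.trace_restrict_eq_of_forall_mem (I : Submodule ℝ L) _ hmem]
    have hres : ((LieAlgebra.ad ℝ L (e r)).restrict (fun x _ => hmem x)) = -(φ r) := by
      ext w
      have h2 : (⁅e r, (w : L)⁆ : L) = -((φ r) w : L) := by
        rw [hφ r w, ← lie_skew]
      exact h2
    erw [hres, map_neg]
    rfl
  -- B H vanishes on I
  have hHI : ∀ v ∈ I, B H v = 0 := by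
    intro v hv; rw [hH]; exact htrI v hv
  -- B H₀ vanishes on I
  have hH0I : ∀ v ∈ I, B H₀ v = 0 := by
    intro v hv
    have : ∀ s : Fin k, B (e s) v = 0 := by
      intro s; rw [← hsymm]; exact horth v hv (e s) (he s)
    simp [hH₀, map_neg, map_sum, map_smul, LinearMap.neg_apply, LinearMap.sum_apply,
      LinearMap.smul_apply, this]
  -- B H and B H₀ agree on e r
  have hHe : ∀ r, B H (e r) = - LinearMap.trace ℝ I (φ r) := by
    intro r; rw [hH]; exact htre r
  have hH0e : ∀ r, B H₀ (e r) = - LinearMap.trace ℝ I (φ r) := by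
    intro r
    have hterm : ∀ s : Fin k, B (c s • e s) (e r) =
        if s = r then LinearMap.trace ℝ I (φ r) else 0 := by
      intro s
      by_cases h : s = r
      · subst h
        rw [map_smul, LinearMap.smul_apply, hdiag s, if_pos rfl, smul_eq_mul]
        simp only [hc]
        rcases hε s with h1 | h1 <;> rw [h1] <;> ring
      · rw [map_smul, LinearMap.smul_apply, hoffdiag s r h, if_neg h, smul_zero]
    have h3 : B H₀ (e r) = -∑ s, B (c s • e s) (e r) := by
      simp [hH₀, map_neg, map_sum, LinearMap.neg_apply, LinearMap.sum_apply]
    rw [h3]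
    rw [Finset.sum_congr rfl (fun s _ => hterm s), Finset.sum_ite_eq' Finset.univ r
      (fun _ => LinearMap.trace ℝ I (φ r))]
    simp
  -- H = H₀
  have key : H = H₀ := by
    have hdiff : ∀ y : L, B (H - H₀) y = 0 := by
      have hI : ∀ v ∈ I, B (H - H₀) v = 0 := by
        intro v hv
        rw [map_sub, LinearMap.sub_apply, hHI v hv, hH0I v hv, sub_self]
      have hA : ∀ X ∈ a.toSubmodule, B (H - H₀) X = 0 := by
        intro X hX
        rw [← hspan] at hX
        induction hX using Submodule.span_induction with
        | mem x hx =>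
          obtain ⟨s, rfl⟩ := hx
          rw [map_sub, LinearMap.sub_apply, hHe s, hH0e s, sub_self]
        | zero => simp
        | add x y _ _ hx hy => rw [map_add, hx, hy, add_zero]
        | smul t x _ hx => rw [map_smul, hx, smul_zero]
      intro y
      have hy : y ∈ (I : Submodule ℝ L) ⊔ a.toSubmodule := by
        rw [hcompl.sup_eq_top]; trivial
      obtain ⟨v, hv, X, hX, rfl⟩ := Submodule.mem_sup.mp hy
      rw [map_add, hI v hv, hA X hX, add_zero]
    exact sub_eq_zero.mp (hnondeg.1 (H - H₀) hdiff)
  refine ⟨key, ?_, hHI, ?_⟩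
  · rw [key, hH₀]
    exact neg_mem (Submodule.sum_mem _ fun s _ => Submodule.smul_mem _ _ (he s))
  · intro v
    rw [key, hH₀, neg_lie]
    have hsum : (⁅∑ s, c s • e s, (v : L)⁆ : L) = ∑ s, c s • ⁅e s, (v : L)⁆ := by
      have h1 : (⁅∑ s, c s • e s, (v : L)⁆ : L) =
          (LieAlgebra.ad ℝ L (∑ s, c s • e s)) (v : L) := rfl
      rw [h1, map_sum]
      simp [LinearMap.sum_apply, LinearMap.smul_apply, LieAlgebra.ad_apply]
    rw [hsum]
    have hterm : ∀ s : Fin k, c s • (⁅e s, (v : L)⁆ : L) = -(c s • ((φ s) v : L)) := by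
      intro s
      rw [← lie_skew, hφ s v, smul_neg]
    rw [Finset.sum_congr rfl (fun s _ => hterm s), Finset.sum_neg_distrib, neg_neg]
end

section
/- Let V be a finite-dimensional vector space over ℝ, let 𝔥 ⊆ gl(V) be a Lie subalgebra, and let 𝔫 be a Lie ideal of 𝔥 all of whose elements are nilpotent endomorphisms of V. Then Tr(f ∘ g) = 0 for every f ∈ 𝔫 and every g ∈ 𝔥. -/
set_option autoImplicit false

attribute [local instance 100] LieRing.ofAssociativeRing

/-- If `n` is a Lie ideal of a Lie subalgebra `h ⊆ gl(V)` all of whose elements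
are nilpotent endomorphisms of the finite-dimensional real vector space `V`,
then `Tr(f ∘ g) = 0` for every `f ∈ n` and `g ∈ h`. -/
theorem trace_eq_zero_of_nilpotent_ideal
    (V : Type*) [AddCommGroup V] [Module ℝ V] [Module.Finite ℝ V]
    (h : LieSubalgebra ℝ (Module.End ℝ V)) (n : LieIdeal ℝ h)
    (hnilp : ∀ f ∈ n, IsNilpotent (f : Module.End ℝ V)) :
    ∀ f ∈ n, ∀ g : h,
      LinearMap.trace ℝ V ((f : Module.End ℝ V) ∘ₗ (g : Module.End ℝ V)) = 0 := by
  intro f hf g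
  -- `V` is a Lie module over `n` (via `n ⊆ h ⊆ End V`); Engel's theorem applies.
  have hnil : LieModule.IsNilpotent n V := by
    rw [LieModule.isNilpotent_iff_forall' (R := ℝ)]
    intro x
    have : LieModule.toEnd ℝ n V x = ((x : h) : Module.End ℝ V) := by
      ext v; rfl
    rw [this]
    exact hnilp (x : h) x.2
  obtain ⟨k, hk⟩ := LieModule.IsNilpotent.nilpotent ℝ n V
  -- the filtration
  set W : ℕ → Submodule ℝ V :=
    fun j => (LieModule.lowerCentralSeries ℝ n V j : Submodule ℝ V) with hW
  -- elements of `n` lower the filtration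
  have claimA : ∀ x ∈ n, ∀ j, ∀ v ∈ W j, ((x : h) : Module.End ℝ V) v ∈ W (j + 1) := by
    intro x hx j v hv
    have : ⁅(⟨x, hx⟩ : n), v⁆ ∈ ⁅(⊤ : LieIdeal ℝ n), LieModule.lowerCentralSeries ℝ n V j⁆ :=
      LieSubmodule.lie_mem_lie (LieSubmodule.mem_top _) hv
    rw [← LieModule.lowerCentralSeries_succ] at this
    exact this
  -- elements of `h` preserve the filtration
  have claimB : ∀ (g : h) (j : ℕ), ∀ v ∈ W j, ((g : Module.End ℝ V)) v ∈ W j := by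
    intro g j
    induction j with
    | zero =>
      intro v _
      simp [hW]
    | succ j ih =>
      intro v hv
      have hv' : v ∈ (LieModule.lowerCentralSeries ℝ n V (j + 1) : Submodule ℝ V) := hv
      have hspan : (LieModule.lowerCentralSeries ℝ n V (j + 1) : Submodule ℝ V) =
          Submodule.span ℝ
            { m | ∃ x ∈ (⊤ : LieIdeal ℝ n),
                ∃ w ∈ LieModule.lowerCentralSeries ℝ n V j, ⁅x, w⁆ = m } := by
        rw [LieModule.lowerCentralSeries_succ]
        exact LieSubmodule.lieIdeal_oper_eq_linear_span' ..
      rw [hspan] at hv'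
      clear hv
      rename' hv' => hv
      refine Submodule.span_induction ?_ ?_ ?_ ?_ hv
      · rintro m ⟨x, -, w, hw, rfl⟩
        have hxw : ⁅x, w⁆ = ((x : h) : Module.End ℝ V) w := rfl
        rw [hxw]
        -- g (x w) = x (g w) + [g, x] w
        have hcomm : (g : Module.End ℝ V) (((x : h) : Module.End ℝ V) w)
            = ((x : h) : Module.End ℝ V) ((g : Module.End ℝ V) w)
              + ((⁅g, (x : h)⁆ : h) : Module.End ℝ V) w := by
          have hb : ((⁅g, (x : h)⁆ : h) : Module.End ℝ V)
              = ⁅(g : Module.End ℝ V), ((x : h) : Module.End ℝ V)⁆ := rfl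
          rw [hb, Ring.lie_def]
          simp [Module.End.mul_apply]
        rw [hcomm]
        refine Submodule.add_mem _ ?_ ?_
        · exact claimA (x : h) x.2 j _ (ih w hw)
        · exact claimA _ (n.lie_mem x.2) j w hw
      · simp
      · intro a b _ _ ha hb
        rw [map_add]
        exact Submodule.add_mem _ ha hb
      · intro c a _ ha
        rw [map_smul]
        exact Submodule.smul_mem _ c ha
  -- hence `f ∘ g` is nilpotent
  have key : ∀ j : ℕ, ∀ v : V,
      (((f : Module.End ℝ V) ∘ₗ (g : Module.End ℝ V)) ^ j) v ∈ W j := by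
    intro j
    induction j with
    | zero => intro v; simp [hW]
    | succ j ih =>
      intro v
      rw [pow_succ']
      have h1 := claimB g j _ (ih v)
      have h2 := claimA f hf j _ h1
      exact h2
  have hnilfg : IsNilpotent ((f : Module.End ℝ V) ∘ₗ (g : Module.End ℝ V)) := by
    refine ⟨k, ?_⟩
    ext v
    have h0 : (((f : Module.End ℝ V) ∘ₗ (g : Module.End ℝ V)) ^ k) v
        ∈ (LieModule.lowerCentralSeries ℝ n V k : Submodule ℝ V) := key k v
    rw [hk] at h0
    simpa using h0
  have := LinearMap.isNilpotent_trace_of_isNilpotent hnilfg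
  exact this.eq_zero
end

section
/- Let 𝔤̃ be a finite-dimensional real Lie algebra admitting a vector-space direct sum decomposition 𝔤̃ = 𝔤 ⊕ 𝔞, where 𝔤 is a nilpotent ideal and 𝔞 is an abelian subalgebra. Suppose there exist a nonzero real number λ and a nondegenerate symmetric bilinear form ⟨·,·⟩ on 𝔞 such that Tr(ad X ∘ ad Y) = −λ ⟨X,Y⟩ for all X,Y ∈ 𝔞 (traces of endomorphisms of 𝔤̃). Then every nilpotent ideal of 𝔤̃ is contained in 𝔤; in particular 𝔤 is the nilradical (the maximal nilpotent ideal) of 𝔤̃. -/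
set_option autoImplicit false

lemma aux_lcs_le (L : Type*) [LieRing L] [LieAlgebra ℝ L] (J : LieIdeal ℝ L) (i : ℕ) :
    LieSubmodule.toSubmodule (J.lcs L (i+1)) ≤
      Submodule.map (LieSubmodule.toSubmodule (J : LieSubmodule ℝ L L)).subtype
        (LieModule.lowerCentralSeries ℝ J J i).toSubmodule := by
  induction i with
  | zero =>
      rw [LieIdeal.lcs_succ, LieSubmodule.lieIdeal_oper_eq_linear_span']
      rw [Submodule.span_le]
      rintro - ⟨x, hx, n, -, rfl⟩
      have hmem : ⁅x, n⁆ ∈ J := by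
        rw [← lie_skew]
        exact neg_mem (J.lie_mem hx)
      exact ⟨⟨⁅x, n⁆, hmem⟩, by simp, rfl⟩
  | succ i ih =>
      rw [LieIdeal.lcs_succ, LieSubmodule.lieIdeal_oper_eq_linear_span']
      rw [Submodule.span_le]
      rintro - ⟨x, hx, n, hn, rfl⟩
      obtain ⟨m, hm, rfl⟩ := ih hn
      refine ⟨⁅(⟨x, hx⟩ : J), m⁆, ?_, rfl⟩
      rw [LieModule.lowerCentralSeries_succ]
      exact LieSubmodule.lie_mem_lie (LieSubmodule.mem_top _) hm

lemma trace_ad_comp_ad_eq_zero (L : Type*) [LieRing L] [LieAlgebra ℝ L] [Module.Finite ℝ L]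
    (J : LieIdeal ℝ L) (hJ : LieRing.IsNilpotent J) {x : L} (hx : x ∈ J) (y : L) :
    LinearMap.trace ℝ L ((LieAlgebra.ad ℝ L x) ∘ₗ (LieAlgebra.ad ℝ L y)) = 0 := by
  obtain ⟨k, hk⟩ := (LieModule.isNilpotent_iff ℝ J J).mp hJ
  set f : Module.End ℝ L := (LieAlgebra.ad ℝ L x) ∘ₗ (LieAlgebra.ad ℝ L y) with hf
  have key : ∀ i : ℕ, ∀ z : L, (f ^ (i + 1)) z ∈ J.lcs L (i + 1) := by
    intro i
    induction i with
    | zero =>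
        intro z
        have : (f ^ 1) z = ⁅x, ⁅y, z⁆⁆ := by simp [hf, LieAlgebra.ad_apply]
        rw [this, LieIdeal.lcs_succ]
        exact LieSubmodule.lie_mem_lie hx (LieSubmodule.mem_top _)
    | succ i ih =>
        intro z
        have h1 : (f ^ (i + 2)) z = f ((f ^ (i + 1)) z) := by
          rw [pow_succ']; rfl
        rw [h1]
        have h2 : ⁅y, (f ^ (i + 1)) z⁆ ∈ J.lcs L (i + 1) :=
          (J.lcs L (i + 1)).lie_mem (ih z)
        have h3 : f ((f ^ (i + 1)) z) = ⁅x, ⁅y, (f ^ (i + 1)) z⁆⁆ := by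
          simp [hf, LieAlgebra.ad_apply]
        rw [h3, LieIdeal.lcs_succ]
        exact LieSubmodule.lie_mem_lie hx h2
  have hbot : LieSubmodule.toSubmodule (J.lcs L (k + 1)) = ⊥ := by
    refine le_bot_iff.mp ?_
    refine (aux_lcs_le L J k).trans ?_
    rw [hk]
    simp
  have hfn : IsNilpotent f := by
    refine ⟨k + 2, ?_⟩
    ext z
    have := key (k + 1) z
    have h4 : (f ^ (k + 2)) z ∈ J.lcs L (k + 1) := by
      have h5 : J.lcs L (k + 2) ≤ J.lcs L (k + 1) := by
        rw [LieIdeal.lcs_succ]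
        exact LieSubmodule.lie_le_right _ _
      exact h5 this
    have h6 : (f ^ (k + 2)) z ∈ (⊥ : Submodule ℝ L) := hbot ▸ h4
    simpa using h6
  have := LinearMap.isNilpotent_trace_of_isNilpotent hfn
  exact this.eq_zero


/-- Let `L = I ⊕ a` with `I` a nilpotent ideal and `a` an abelian subalgebra,
and suppose there are `λ ≠ 0` and a nondegenerate symmetric bilinear form on `a`
with `Tr(ad X ∘ ad Y) = -λ ⟨X,Y⟩` for `X, Y ∈ a`. Then every nilpotent ideal of
`L` is contained in `I`; in particular `I` is the nilradical of `L`. -/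
theorem nilpotent_ideal_le_of_pseudoIwasawa
    (L : Type*) [LieRing L] [LieAlgebra ℝ L] [Module.Finite ℝ L]
    (I : LieIdeal ℝ L) (a : LieSubalgebra ℝ L)
    (hnil : LieRing.IsNilpotent I) (hab : IsLieAbelian a)
    (hcompl : IsCompl (I : Submodule ℝ L) a.toSubmodule)
    (lam : ℝ) (hlam : lam ≠ 0)
    (Ba : LinearMap.BilinForm ℝ a)
    (hsymm : ∀ X Y : a, Ba X Y = Ba Y X) (hnondeg : Ba.Nondegenerate)
    (htrace : ∀ X Y : a,
      LinearMap.trace ℝ L ((LieAlgebra.ad ℝ L (X : L)) ∘ₗ (LieAlgebra.ad ℝ L (Y : L))) =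
        -lam * Ba X Y) :
    ∀ J : LieIdeal ℝ L, LieRing.IsNilpotent J →
      (J : Submodule ℝ L) ≤ (I : Submodule ℝ L) := by
  intro J hJ z hz
  have hzsup : z ∈ (I : Submodule ℝ L) ⊔ a.toSubmodule := by
    rw [hcompl.sup_eq_top]; trivial
  obtain ⟨n, hn, X, hX, rfl⟩ := Submodule.mem_sup.mp hzsup
  have hX0 : (⟨X, hX⟩ : a) = 0 := by
    apply hnondeg.1
    intro Y
    have h1 : LinearMap.trace ℝ L
        ((LieAlgebra.ad ℝ L (n + X)) ∘ₗ (LieAlgebra.ad ℝ L (Y : L))) = 0 :=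
      trace_ad_comp_ad_eq_zero L J hJ hz (Y : L)
    have h2 : LinearMap.trace ℝ L
        ((LieAlgebra.ad ℝ L n) ∘ₗ (LieAlgebra.ad ℝ L (Y : L))) = 0 :=
      trace_ad_comp_ad_eq_zero L I hnil hn (Y : L)
    have h3 : LinearMap.trace ℝ L
        ((LieAlgebra.ad ℝ L X) ∘ₗ (LieAlgebra.ad ℝ L (Y : L))) = 0 := by
      have hadd : (LieAlgebra.ad ℝ L (n + X)) ∘ₗ (LieAlgebra.ad ℝ L (Y : L)) =
          (LieAlgebra.ad ℝ L n) ∘ₗ (LieAlgebra.ad ℝ L (Y : L)) +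
          (LieAlgebra.ad ℝ L X) ∘ₗ (LieAlgebra.ad ℝ L (Y : L)) := by
        rw [map_add, LinearMap.add_comp]
      have := h1
      rw [hadd, map_add, h2, zero_add] at this
      exact this
    have h4 := htrace ⟨X, hX⟩ Y
    rw [h3] at h4
    have := h4.symm
    rcases mul_eq_zero.mp this with h | h
    · exact absurd (neg_eq_zero.mp h) hlam
    · exact h
  have : X = 0 := congrArg Subtype.val hX0
  simpa [this] using hn
end
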